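/- Let V be a variety of τ-algebras. The assignments K ↦ B^K and B ↦ K^B between subclasses of V_fg and subfamilies of Con(F^V) establish a one-to-one correspondence between the subclasses of V_fg closed under finitely generated subalgebras and the subfamilies of Con(F^V) closed under inverse substitution. -/

import Mathlib

/-! Universal-algebra preamble: functional signatures, algebras (with nonempty
carriers, as usual in universal algebra), terms, homomorphisms, congruences,
quotients, free algebras, and the operators/uniformities of the paper.

Families indexed over the components of a clone are indexed by `k : ℕ`, where
index `k` stands for the component of arity `k + 1` (so all arities `≥ 1`). -/

/-- A functional signature: a type of function symbols together with arities. -/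
structure Signature : Type 1 where
  F : Type
  arity : F → ℕ

/-- A τ-algebra: a nonempty carrier together with an interpretation of each symbol. -/
structure Alg (σ : Signature) : Type 1 where
  carrier : Type
  nonempty : Nonempty carrier
  op : ∀ f : σ.F, (Fin (σ.arity f) → carrier) → carrier

/-- Abstract τ-terms over the variables x_1, …, x_n. -/
inductive Trm (σ : Signature) (n : ℕ) : Type
  | var : Fin n → Trm σ n
  | app : ∀ f : σ.F, (Fin (σ.arity f) → Trm σ n) → Trm σ n

variable {σ : Signature}

/-- Evaluation of a term in an algebra under a valuation of the variables. -/
def Trm.eval {n : ℕ} (A : Alg σ) (v : Fin n → A.carrier) : Trm σ n → A.carrier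
  | .var i => v i
  | .app f ts => A.op f fun i => Trm.eval A v (ts i)

/-- The term operation `t^A` induced on `A` by the term `t`. -/
def termOp {n : ℕ} (A : Alg σ) (t : Trm σ n) : (Fin n → A.carrier) → A.carrier :=
  fun v => t.eval A v

/-- Homomorphisms of τ-algebras. -/
def IsHom (A B : Alg σ) (h : A.carrier → B.carrier) : Prop :=
  ∀ (f : σ.F) (x : Fin (σ.arity f) → A.carrier), h (A.op f x) = B.op f fun i => h (x i)

/-- Isomorphism of τ-algebras. -/
def Isomorphic (A B : Alg σ) : Prop :=
  ∃ h : A.carrier → B.carrier, IsHom A B h ∧ Function.Bijective h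

/-- Membership in the subuniverse generated by `S`. -/
inductive InClosure (A : Alg σ) (S : Set A.carrier) : A.carrier → Prop
  | base : ∀ a ∈ S, InClosure A S a
  | app : ∀ (f : σ.F) (x : Fin (σ.arity f) → A.carrier),
      (∀ i, InClosure A S (x i)) → InClosure A S (A.op f x)

/-- An algebra is finitely generated if a finite subset generates it. -/
def FinGen (A : Alg σ) : Prop :=
  ∃ S : Set A.carrier, S.Finite ∧ ∀ a, InClosure A S a

/-- Product of a family of algebras. -/
def PiAlg {ι : Type} (A : ι → Alg σ) : Alg σ where
  carrier := ∀ i, (A i).carrier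
  nonempty := ⟨fun i => Classical.choice (A i).nonempty⟩
  op f x := fun i => (A i).op f fun j => x j i

/-- A congruence: an equivalence relation compatible with all operations. -/
def IsCongruence (A : Alg σ) (r : A.carrier → A.carrier → Prop) : Prop :=
  Equivalence r ∧ ∀ (f : σ.F) (x y : Fin (σ.arity f) → A.carrier),
    (∀ i, r (x i) (y i)) → r (A.op f x) (A.op f y)

/-- Bundled congruences on an algebra. -/
structure Cong (A : Alg σ) : Type where
  r : A.carrier → A.carrier → Prop
  iscon : IsCongruence A r

/-- The quotient algebra of `A` by (a relation which is intended to be) a congruence. -/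
noncomputable def quotAlg (A : Alg σ) (r : A.carrier → A.carrier → Prop) : Alg σ where
  carrier := Quot r
  nonempty := ⟨Quot.mk r (Classical.choice A.nonempty)⟩
  op f x := Quot.mk r (A.op f fun i => (x i).out)

/-- The subalgebra of `A` on a nonempty subset closed under the operations. -/
def subAlg (A : Alg σ) (S : Set A.carrier) (hne : S.Nonempty)
    (hcl : ∀ (f : σ.F) (x : Fin (σ.arity f) → A.carrier), (∀ i, x i ∈ S) → A.op f x ∈ S) :
    Alg σ where
  carrier := {a : A.carrier // a ∈ S}
  nonempty := ⟨⟨hne.choose, hne.choose_spec⟩⟩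
  op f x := ⟨A.op f fun i => (x i).1, hcl f _ fun i => (x i).2⟩

/-- The subalgebra of `A` generated by a nonempty subset `S`. -/
def genSubAlg (A : Alg σ) (S : Set A.carrier) (hne : S.Nonempty) : Alg σ where
  carrier := {a : A.carrier // InClosure A S a}
  nonempty := ⟨⟨hne.choose, InClosure.base _ hne.choose_spec⟩⟩
  op f x := ⟨A.op f fun i => (x i).1, InClosure.app f _ fun i => (x i).2⟩

/-- H: homomorphic images of members of `K`. -/
def Hcl (K : Set (Alg σ)) : Set (Alg σ) :=
  {B | ∃ A ∈ K, ∃ h : A.carrier → B.carrier, IsHom A B h ∧ Function.Surjective h}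

/-- I: isomorphic copies of members of `K`. -/
def Icl (K : Set (Alg σ)) : Set (Alg σ) := {B | ∃ A ∈ K, Isomorphic A B}

/-- S: isomorphic copies of subalgebras (i.e. algebras embedding into members) of `K`. -/
def Scl (K : Set (Alg σ)) : Set (Alg σ) :=
  {B | ∃ A ∈ K, ∃ e : B.carrier → A.carrier, IsHom B A e ∧ Function.Injective e}

/-- P_f: isomorphic copies of finite (nonempty) products of members of `K`. -/
def Pfcl (K : Set (Alg σ)) : Set (Alg σ) :=
  {B | ∃ (n : ℕ) (A : Fin (n + 1) → Alg σ), (∀ i, A i ∈ K) ∧ Isomorphic (PiAlg A) B}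

/-- S_f: isomorphic copies of finitely generated subalgebras of members of `K`. -/
def Sf (K : Set (Alg σ)) : Set (Alg σ) :=
  {B | FinGen B ∧ ∃ A ∈ K, ∃ e : B.carrier → A.carrier, IsHom B A e ∧ Function.Injective e}

/-- S P_f: isomorphic copies of finitely generated subalgebras of finite products
of members of `K`. -/
def SPf (K : Set (Alg σ)) : Set (Alg σ) :=
  {B | FinGen B ∧ ∃ (n : ℕ) (A : Fin (n + 1) → Alg σ), (∀ i, A i ∈ K) ∧
    ∃ e : B.carrier → (PiAlg A).carrier, IsHom B (PiAlg A) e ∧ Function.Injective e}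

/-- A pseudovariety of finitely generated algebras: a class of finitely generated
algebras closed under homomorphic images and under isomorphic copies of finitely
generated subalgebras of finite products of its members. -/
def IsPseudovarietyFG (C : Set (Alg σ)) : Prop :=
  (∀ A ∈ C, FinGen A) ∧ Hcl C ⊆ C ∧ SPf C ⊆ C

/-- A pseudovariety of finite algebras: a class of finite algebras closed under
finite products, subalgebras and homomorphic images. -/
def IsPseudovarietyFin (C : Set (Alg σ)) : Prop :=
  (∀ A ∈ C, Finite A.carrier) ∧ Hcl C ⊆ C ∧ Scl C ⊆ C ∧ Pfcl C ⊆ C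

/-- A variety: a class closed under arbitrary products, subalgebras and
homomorphic images. -/
def IsVariety (V : Set (Alg σ)) : Prop :=
  (∀ (ι : Type) (A : ι → Alg σ), (∀ i, A i ∈ V) → PiAlg A ∈ V) ∧
  Scl V ⊆ V ∧ Hcl V ⊆ V

/-- The identities of the class `C`: `s` and `t` are identified iff they induce the
same operation on every member of `C`. -/
def FreeCon (C : Set (Alg σ)) (n : ℕ) : Trm σ n → Trm σ n → Prop :=
  fun s t => ∀ A ∈ C, ∀ v : Fin n → A.carrier, s.eval A v = t.eval A v

/-- `freeAlg C k` is `F_{k+1}^C`, the free algebra for `C` on `k + 1` generators: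
the term algebra on the variables `x_1, …, x_{k+1}` modulo the identities of `C`.
(The index `k` stands for arity `k + 1`, so all components have arity `≥ 1`.) -/
noncomputable def freeAlg (C : Set (Alg σ)) (k : ℕ) : Alg σ where
  carrier := Quot (FreeCon C (k + 1))
  nonempty := ⟨Quot.mk _ (Trm.var 0)⟩
  op f x := Quot.mk _ (Trm.app f fun i => (x i).out)

/-- The finitely generated members of `V`. -/
def Vfg (V : Set (Alg σ)) : Set (Alg σ) := {A | A ∈ V ∧ FinGen A}

/-- `B^K`: the congruences of the free algebras whose quotient is isomorphic to a
member of `K`. -/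
def BK (V K : Set (Alg σ)) (k : ℕ) : Set (Cong (freeAlg V k)) :=
  {θ | quotAlg (freeAlg V k) θ.r ∈ Icl K}

/-- `K^B`: isomorphic copies of the quotients of free algebras by congruences in `B`. -/
def KB (V : Set (Alg σ)) (B : ∀ k : ℕ, Set (Cong (freeAlg V k))) : Set (Alg σ) :=
  Icl {A | ∃ (k : ℕ), ∃ θ ∈ B k, A = quotAlg (freeAlg V k) θ.r}

/-- `θ/t̄`: the inverse substitution of the congruence `θ` along the tuple `t̄`;
`s (θ/t̄) s'` iff `s(t₁,…,t_m) θ s'(t₁,…,t_m)`. -/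
noncomputable def conSubstRel {V : Set (Alg σ)} {k : ℕ} (θ : Cong (freeAlg V k)) {m : ℕ}
    (t : Fin (m + 1) → (freeAlg V k).carrier) :
    (freeAlg V m).carrier → (freeAlg V m).carrier → Prop :=
  fun s s' => θ.r (Trm.eval (freeAlg V k) t s.out) (Trm.eval (freeAlg V k) t s'.out)

/-- A family of congruences is closed under inverse substitution. -/
def InvSubstClosed (V : Set (Alg σ)) (B : ∀ k : ℕ, Set (Cong (freeAlg V k))) : Prop :=
  ∀ (k m : ℕ), ∀ θ ∈ B k, ∀ t : Fin (m + 1) → (freeAlg V k).carrier,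
    ∃ θ' ∈ B m, θ'.r = conSubstRel θ t

/-- A family of congruences is closed under finite intersections (componentwise). -/
def InterClosed (V : Set (Alg σ)) (B : ∀ k : ℕ, Set (Cong (freeAlg V k))) : Prop :=
  ∀ (k n : ℕ) (θs : Fin (n + 1) → Cong (freeAlg V k)), (∀ i, θs i ∈ B k) →
    ∃ θ' ∈ B k, θ'.r = fun a b => ∀ i, (θs i).r a b

/-- A family of congruences is upward closed (componentwise). -/
def UpClosed (V : Set (Alg σ)) (B : ∀ k : ℕ, Set (Cong (freeAlg V k))) : Prop :=
  ∀ (k : ℕ), ∀ θ ∈ B k, ∀ ψ : Cong (freeAlg V k), (∀ a b, θ.r a b → ψ.r a b) → ψ ∈ B k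

/-- A filter on `X × X` is a uniformity: every entourage contains the diagonal, the
converse of an entourage is an entourage, and the generalised triangle inequality. -/
def IsUniformity {X : Type} (u : Filter (X × X)) : Prop :=
  (∀ U ∈ u, ∀ x : X, (x, x) ∈ U) ∧
  (∀ U ∈ u, {p : X × X | (p.2, p.1) ∈ U} ∈ u) ∧
  (∀ U ∈ u, ∃ W ∈ u, ∀ x y z : X, (x, y) ∈ W → (y, z) ∈ W → (x, z) ∈ U)

/-- `U^C` (the component of index `k`, i.e. of arity `k + 1`): the filter on
`F_{k+1}^V × F_{k+1}^V` generated by the congruences `θ` of `F_{k+1}^V` such that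
`F_{k+1}^V/θ` is isomorphic to a member of `C`. -/
noncomputable def unifC (V C : Set (Alg σ)) (k : ℕ) :
    Filter ((freeAlg V k).carrier × (freeAlg V k).carrier) :=
  Filter.generate
    {U | ∃ θ : Cong (freeAlg V k), quotAlg (freeAlg V k) θ.r ∈ Icl C ∧ U = {p | θ.r p.1 p.2}}

/-- The `(k+1)`-ary part of `Clo(A)`: the `(k+1)`-ary term operations of `A`. -/
def CloK (A : Alg σ) (k : ℕ) : Type :=
  {g : (Fin (k + 1) → A.carrier) → A.carrier // ∃ t : Trm σ (k + 1), g = termOp A t}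

/-- The uniformity of pointwise convergence on the `(k+1)`-ary part of `Clo(A)`:
generated by the sets `U_ā = {(f, g) | f(ā) = g(ā)}`. -/
noncomputable def ptwUnif (A : Alg σ) (k : ℕ) : Filter (CloK A k × CloK A k) :=
  Filter.generate {U | ∃ a : Fin (k + 1) → A.carrier, U = {p | p.1.1 a = p.2.1 a}}

/-- The natural map from the free algebra for `C` onto `Clo(A)`, sending the class
of a term `t` to the term operation `t^A`. -/
noncomputable def natMap (C : Set (Alg σ)) (A : Alg σ) (k : ℕ) :
    (freeAlg C k).carrier → CloK A k :=
  fun q => ⟨termOp A q.out, q.out, rfl⟩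

/-- The natural map between the free algebras of two classes (class of `t` to
class of `t`). -/
noncomputable def freeNatMap (C D : Set (Alg σ)) (k : ℕ) :
    (freeAlg C k).carrier → (freeAlg D k).carrier :=
  fun q => Quot.mk _ q.out

/-- The natural map `Clo(A) → Clo(B)`, sending `t^A` to `t^B`. -/
noncomputable def cloNatMap (A B : Alg σ) (k : ℕ) : CloK A k → CloK B k :=
  fun g => ⟨termOp B (Classical.choose g.2), Classical.choose g.2, rfl⟩

/-- The variety generated by `A`. -/
def varietyGen (A : Alg σ) : Set (Alg σ) :=
  {B | ∀ V : Set (Alg σ), IsVariety V → A ∈ V → B ∈ V}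

/-- The pseudovariety generated by `A`: the smallest class containing `A` closed
under finite products, subalgebras and homomorphic images. -/
def psvGen (A : Alg σ) : Set (Alg σ) :=
  {B | ∀ C : Set (Alg σ), A ∈ C → Hcl C ⊆ C → Scl C ⊆ C → Pfcl C ⊆ C → B ∈ C}

/-- The pseudovariety of finitely generated algebras generated by `A`: the finitely
generated members of the pseudovariety generated by `A`. -/
def psvFgGen (A : Alg σ) : Set (Alg σ) := {B | FinGen B ∧ B ∈ psvGen A}

/-! Every finitely generated member of `V` is a quotient `F_n^V/θ`, and a homomorphism
`F_m^V → F_k^V/θ` is determined by the images of the generators, so its kernel is the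
inverse substitution `θ/t̄` along lifts `t̄` of those images. Hence `F_m^V/(θ/t̄)` embeds
into `F_k^V/θ`, which makes `B^K` closed under inverse substitution when `K` is closed
under `S_f`. Conversely, when `B` is closed under inverse substitution, a finitely
generated `A ↪ F_m^V/ψ` with `ψ ∈ B` is `F_n^V/(ψ/t̄)`, and any `θ` with
`F_k^V/θ ≅ F_m^V/ψ` equals `ψ/t̄`; so `K^B` is closed under `S_f` and `B^{K^B} = B`. -/

theorem Equivalence.quot_mk_out_rel {X : Type} {r : X → X → Prop} (hr : Equivalence r)
    (a : X) : r (Quot.mk r a).out a :=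
  (hr.quot_mk_eq_iff _ _).1 (Quot.out_eq _)

theorem Cong.r_injective {A : Alg σ} : Function.Injective (Cong.r (A := A)) := by
  rintro ⟨r, _⟩ ⟨r', _⟩ rfl
  rfl

namespace IsHom

variable {A B C : Alg σ} {h : A.carrier → B.carrier}

theorem comp {g : B.carrier → C.carrier} (hh : IsHom A B h) (hg : IsHom B C g) :
    IsHom A C (fun a => g (h a)) := fun f x => by
  show g (h (A.op f x)) = _
  rw [hh f x, hg f]

theorem pi {ι : Type} {B : ι → Alg σ} {h : ∀ i, A.carrier → (B i).carrier}
    (hh : ∀ i, IsHom A (B i) (h i)) : IsHom A (PiAlg B) (fun a i => h i a) :=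
  fun f x => funext fun i => hh i f x

theorem eval (hh : IsHom A B h) {n : ℕ} (v : Fin n → A.carrier) (u : Trm σ n) :
    h (u.eval A v) = u.eval B (fun i => h (v i)) := by
  induction u with
  | var j => rfl
  | app f ts ih =>
    show h (A.op f _) = B.op f _
    rw [hh]
    exact congrArg _ (funext ih)

theorem isCongruence_ker (hh : IsHom A B h) : IsCongruence A (fun a b => h a = h b) :=
  ⟨⟨fun _ => rfl, Eq.symm, Eq.trans⟩, fun f x y hxy => by
    show h (A.op f x) = h (A.op f y)
    rw [hh f x, hh f y, funext hxy]⟩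

theorem exists_quotAlg_embedding (hh : IsHom A B h) {r : A.carrier → A.carrier → Prop}
    (hr : ∀ a b, r a b ↔ h a = h b) :
    ∃ e : (quotAlg A r).carrier → B.carrier, IsHom (quotAlg A r) B e ∧
      Function.Injective e ∧ ∀ a, e (Quot.mk r a) = h a := by
  refine ⟨Quot.lift h (fun a b hab => (hr a b).1 hab), fun f x => ?_, ?_, fun _ => rfl⟩
  · show h (A.op f fun i => (x i).out) = _
    rw [hh]
    congr 1
    funext i
    conv_rhs => rw [← Quot.out_eq (x i)]
  · intro q q' hqq'
    induction q using Quot.ind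
    induction q' using Quot.ind
    exact Quot.sound ((hr _ _).2 hqq')

theorem isomorphic_quotAlg (hh : IsHom A B h) (hs : Function.Surjective h)
    {r : A.carrier → A.carrier → Prop} (hr : ∀ a b, r a b ↔ h a = h b) :
    Isomorphic (quotAlg A r) B := by
  obtain ⟨e, he, hei, hemk⟩ := hh.exists_quotAlg_embedding hr
  refine ⟨e, he, hei, fun b => ?_⟩
  obtain ⟨a, rfl⟩ := hs b
  exact ⟨Quot.mk r a, hemk a⟩

end IsHom

namespace Isomorphic

variable {A B C : Alg σ}

theorem refl (A : Alg σ) : Isomorphic A A := ⟨id, fun _ _ => rfl, Function.bijective_id⟩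

theorem symm (h : Isomorphic A B) : Isomorphic B A := by
  obtain ⟨f, hf, hb⟩ := h
  obtain ⟨g, hgf, hfg⟩ := Function.bijective_iff_has_inverse.1 hb
  refine ⟨g, fun op y => hb.1 ?_, hfg.injective, hgf.surjective⟩
  rw [hfg, hf]
  exact congrArg _ (funext fun i => (hfg (y i)).symm)

theorem trans (h₁ : Isomorphic A B) (h₂ : Isomorphic B C) : Isomorphic A C := by
  obtain ⟨f, hf, hfb⟩ := h₁
  obtain ⟨g, hg, hgb⟩ := h₂
  exact ⟨fun a => g (f a), hf.comp hg, hgb.comp hfb⟩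

end Isomorphic

theorem quotAlg_op_mk {A : Alg σ} (θ : Cong A) (f : σ.F) (y : Fin (σ.arity f) → A.carrier) :
    (quotAlg A θ.r).op f (fun i => Quot.mk θ.r (y i)) = Quot.mk θ.r (A.op f y) :=
  Quot.sound (θ.iscon.2 f _ _ fun i => θ.iscon.1.quot_mk_out_rel (y i))

theorem Cong.isHom_mk {A : Alg σ} (θ : Cong A) : IsHom A (quotAlg A θ.r) (Quot.mk θ.r) :=
  fun f x => (quotAlg_op_mk θ f x).symm

theorem InClosure.mono {A : Alg σ} {S T : Set A.carrier} (hST : S ⊆ T) {a : A.carrier}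
    (h : InClosure A S a) : InClosure A T a := by
  induction h with
  | base a ha => exact .base a (hST ha)
  | app f x _ ih => exact .app f x ih

theorem inClosure_range_eval {A : Alg σ} {n : ℕ} (v : Fin n → A.carrier) (s : Trm σ n) :
    InClosure A (Set.range v) (s.eval A v) := by
  induction s with
  | var j => exact .base _ ⟨j, rfl⟩
  | app f ts ih => exact .app f _ ih

theorem InClosure.exists_eval {A : Alg σ} {n : ℕ} {v : Fin n → A.carrier} {a : A.carrier}
    (h : InClosure A (Set.range v) a) : ∃ s : Trm σ n, s.eval A v = a := by
  induction h with
  | base a ha =>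
    obtain ⟨j, rfl⟩ := ha
    exact ⟨.var j, rfl⟩
  | app f x _ ih =>
    choose ts hts using ih
    exact ⟨.app f ts, congrArg (A.op f) (funext hts)⟩

theorem FinGen.of_surjective {A B : Alg σ} (hA : FinGen A) {h : A.carrier → B.carrier}
    (hh : IsHom A B h) (hs : Function.Surjective h) : FinGen B := by
  obtain ⟨S, hSf, hSg⟩ := hA
  refine ⟨h '' S, hSf.image h, fun b => ?_⟩
  obtain ⟨a, rfl⟩ := hs b
  induction hSg a with
  | base a ha => exact .base _ (Set.mem_image_of_mem h ha)
  | app f x _ ih => rw [hh f x]; exact .app f _ ih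

theorem FinGen.exists_fin_generators {A : Alg σ} (hA : FinGen A) :
    ∃ (n : ℕ) (v : Fin (n + 1) → A.carrier), ∀ a, InClosure A (Set.range v) a := by
  obtain ⟨S, hSf, hSg⟩ := hA
  obtain ⟨a₀⟩ := A.nonempty
  obtain ⟨n, v, hv⟩ := (hSf.insert a₀).fin_embedding
  obtain ⟨i, -⟩ : a₀ ∈ Set.range v := hv ▸ Set.mem_insert a₀ S
  obtain ⟨n, rfl⟩ := Nat.exists_eq_succ_of_ne_zero (Fin.pos i).ne'
  exact ⟨n, v, fun a => (hSg a).mono (hv ▸ Set.subset_insert a₀ S)⟩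

theorem equivalence_freeCon (C : Set (Alg σ)) (n : ℕ) : Equivalence (FreeCon C n) :=
  ⟨fun _ _ _ _ => rfl, fun h A hA v => (h A hA v).symm,
    fun h₁ h₂ A hA v => (h₁ A hA v).trans (h₂ A hA v)⟩

def freeVar (C : Set (Alg σ)) (k : ℕ) (j : Fin (k + 1)) : (freeAlg C k).carrier :=
  Quot.mk _ (.var j)

theorem freeAlg_op_mk {C : Set (Alg σ)} {k : ℕ} (f : σ.F)
    (ts : Fin (σ.arity f) → Trm σ (k + 1)) :
    (freeAlg C k).op f (fun i => Quot.mk _ (ts i)) = Quot.mk _ (.app f ts) :=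
  Quot.sound fun A hA v => congrArg (A.op f) <| funext fun i =>
    (equivalence_freeCon C (k + 1)).quot_mk_out_rel (ts i) A hA v

theorem eval_freeVar {C : Set (Alg σ)} {k : ℕ} (s : Trm σ (k + 1)) :
    s.eval (freeAlg C k) (freeVar C k) = Quot.mk _ s := by
  induction s with
  | var j => rfl
  | app f ts ih =>
    show (freeAlg C k).op f _ = _
    rw [funext ih, freeAlg_op_mk]

theorem IsHom.eq_eval_freeVar {C : Set (Alg σ)} {k : ℕ} {A : Alg σ}
    {h : (freeAlg C k).carrier → A.carrier} (hh : IsHom (freeAlg C k) A h)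
    (q : (freeAlg C k).carrier) : h q = q.out.eval A (fun j => h (freeVar C k j)) := by
  conv_lhs => rw [← Quot.out_eq q, ← eval_freeVar]
  exact hh.eval _ _

theorem finGen_freeAlg (C : Set (Alg σ)) (k : ℕ) : FinGen (freeAlg C k) := by
  refine ⟨Set.range (freeVar C k), Set.finite_range _, fun q => ?_⟩
  rw [← Quot.out_eq q, ← eval_freeVar]
  exact inClosure_range_eval _ _

noncomputable def freeLift (C : Set (Alg σ)) (k : ℕ) (A : Alg σ)
    (v : Fin (k + 1) → A.carrier) : (freeAlg C k).carrier → A.carrier :=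
  fun q => q.out.eval A v

section freeLift

variable {C : Set (Alg σ)} {k : ℕ} {A : Alg σ}

theorem freeLift_mk (hA : A ∈ C) (v : Fin (k + 1) → A.carrier) (s : Trm σ (k + 1)) :
    freeLift C k A v (Quot.mk _ s) = s.eval A v :=
  (equivalence_freeCon C (k + 1)).quot_mk_out_rel s A hA v

theorem isHom_freeLift (hA : A ∈ C) (v : Fin (k + 1) → A.carrier) :
    IsHom (freeAlg C k) A (freeLift C k A v) := by
  intro f x
  obtain ⟨ts, rfl⟩ :
      ∃ ts : Fin (σ.arity f) → Trm σ (k + 1), x = fun i => Quot.mk _ (ts i) :=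
    ⟨fun i => (x i).out, funext fun i => (Quot.out_eq _).symm⟩
  rw [freeAlg_op_mk, freeLift_mk hA]
  simp only [freeLift_mk hA]
  rfl

theorem freeLift_surjective (hA : A ∈ C) {v : Fin (k + 1) → A.carrier}
    (hv : ∀ a, InClosure A (Set.range v) a) : Function.Surjective (freeLift C k A v) :=
  fun a =>
    let ⟨s, hs⟩ := (hv a).exists_eval
    ⟨Quot.mk _ s, (freeLift_mk hA v s).trans hs⟩

end freeLift

/-- `F_k^V` lies in `V` because it embeds into the product of witnesses separating every
pair of terms that `V` does not identify. -/
theorem freeAlg_mem {V : Set (Alg σ)} (hV : IsVariety V) (k : ℕ) : freeAlg V k ∈ V := by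
  have hsep : ∀ p : {p : Trm σ (k + 1) × Trm σ (k + 1) // ¬ FreeCon V (k + 1) p.1 p.2},
      ∃ A ∈ V, ∃ v : Fin (k + 1) → A.carrier, p.1.1.eval A v ≠ p.1.2.eval A v := by
    intro p
    simpa [FreeCon] using p.2
  choose A hA v hv using hsep
  refine hV.2.1 ⟨PiAlg A, hV.1 _ A hA, fun q p => freeLift V k (A p) (v p) q,
    IsHom.pi fun p => isHom_freeLift (hA p) (v p), fun q q' hqq' => ?_⟩
  by_contra hne
  have hq : ¬ FreeCon V (k + 1) q.out q'.out := fun h =>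
    hne (by rw [← Quot.out_eq q, ← Quot.out_eq q']; exact Quot.sound h)
  exact hv ⟨(q.out, q'.out), hq⟩ (congrFun hqq' ⟨(q.out, q'.out), hq⟩)

theorem quotAlg_freeAlg_mem {V : Set (Alg σ)} (hV : IsVariety V) {k : ℕ}
    (θ : Cong (freeAlg V k)) : quotAlg (freeAlg V k) θ.r ∈ V :=
  hV.2.2 ⟨freeAlg V k, freeAlg_mem hV k, Quot.mk θ.r, θ.isHom_mk, Quot.mk_surjective⟩

theorem finGen_quotAlg_freeAlg {C : Set (Alg σ)} {k : ℕ} (θ : Cong (freeAlg C k)) :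
    FinGen (quotAlg (freeAlg C k) θ.r) :=
  (finGen_freeAlg C k).of_surjective θ.isHom_mk Quot.mk_surjective

section InvSubst

variable {V : Set (Alg σ)} {k m : ℕ}

theorem conSubstRel_iff_of_isHom {θ : Cong (freeAlg V k)}
    {t : Fin (m + 1) → (freeAlg V k).carrier}
    {h : (freeAlg V m).carrier → (quotAlg (freeAlg V k) θ.r).carrier}
    (hh : IsHom (freeAlg V m) (quotAlg (freeAlg V k) θ.r) h)
    (ht : ∀ j, Quot.mk θ.r (t j) = h (freeVar V m j)) (a b : (freeAlg V m).carrier) :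
    conSubstRel θ t a b ↔ h a = h b := by
  have hform : ∀ q, h q = Quot.mk θ.r (q.out.eval (freeAlg V k) t) := fun q => by
    rw [hh.eq_eval_freeVar q, θ.isHom_mk.eval]
    simp only [ht]
  rw [hform, hform]
  exact (θ.iscon.1.quot_mk_eq_iff _ _).symm

theorem isHom_mk_freeLift (hV : IsVariety V) (θ : Cong (freeAlg V k))
    (t : Fin (m + 1) → (freeAlg V k).carrier) :
    IsHom (freeAlg V m) (quotAlg (freeAlg V k) θ.r)
      (fun a => Quot.mk θ.r (freeLift V m (freeAlg V k) t a)) :=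
  (isHom_freeLift (freeAlg_mem hV k) t).comp θ.isHom_mk

theorem conSubstRel_iff_mk_freeLift (θ : Cong (freeAlg V k))
    (t : Fin (m + 1) → (freeAlg V k).carrier) (a b : (freeAlg V m).carrier) :
    conSubstRel θ t a b ↔
      Quot.mk θ.r (freeLift V m (freeAlg V k) t a) =
        Quot.mk θ.r (freeLift V m (freeAlg V k) t b) :=
  (θ.iscon.1.quot_mk_eq_iff _ _).symm

theorem isCongruence_conSubstRel (hV : IsVariety V) (θ : Cong (freeAlg V k))
    (t : Fin (m + 1) → (freeAlg V k).carrier) :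
    IsCongruence (freeAlg V m) (conSubstRel θ t) := by
  have hker := funext₂ fun a b => propext (conSubstRel_iff_mk_freeLift θ t a b)
  exact hker ▸ (isHom_mk_freeLift hV θ t).isCongruence_ker

end InvSubst

theorem mem_KB {V : Set (Alg σ)} {B : ∀ k : ℕ, Set (Cong (freeAlg V k))} {A : Alg σ} :
    A ∈ KB V B ↔ ∃ k, ∃ θ ∈ B k, Isomorphic (quotAlg (freeAlg V k) θ.r) A := by
  constructor
  · rintro ⟨_, ⟨k, θ, hθ, rfl⟩, hiso⟩
    exact ⟨k, θ, hθ, hiso⟩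
  · rintro ⟨k, θ, hθ, hiso⟩
    exact ⟨_, ⟨k, θ, hθ, rfl⟩, hiso⟩

section ClassToFamily

variable {V K : Set (Alg σ)}

theorem Icl_subset_Sf (hK : ∀ A ∈ K, FinGen A) : Icl K ⊆ Sf K := by
  rintro B ⟨A, hA, hiso⟩
  obtain ⟨g, hg, hgbij⟩ := hiso.symm
  obtain ⟨h, hh, hbij⟩ := hiso
  exact ⟨(hK A hA).of_surjective hh hbij.2, A, hA, g, hg, hgbij.1⟩

theorem invSubstClosed_BK (hV : IsVariety V) (hK : Sf K ⊆ K) : InvSubstClosed V (BK V K) := by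
  rintro k m θ ⟨A, hA, hiso⟩ t
  let θt : Cong (freeAlg V m) := ⟨conSubstRel θ t, isCongruence_conSubstRel hV θ t⟩
  obtain ⟨e, he, heinj, -⟩ :=
    (isHom_mk_freeLift hV θ t).exists_quotAlg_embedding (conSubstRel_iff_mk_freeLift θ t)
  obtain ⟨g, hg, hgbij⟩ := hiso.symm
  have hmem : quotAlg (freeAlg V m) θt.r ∈ Sf K :=
    ⟨finGen_quotAlg_freeAlg θt, A, hA, fun q => g (e q), he.comp hg, hgbij.1.comp heinj⟩
  exact ⟨θt, ⟨_, hK hmem, .refl _⟩, rfl⟩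

theorem KB_BK_subset (hK : Icl K ⊆ K) : KB V (BK V K) ⊆ K := by
  intro A hA
  obtain ⟨k, θ, ⟨A', hA', hiso'⟩, hiso⟩ := mem_KB.1 hA
  exact hK ⟨A', hA', hiso'.trans hiso⟩

theorem subset_KB_BK (hK : K ⊆ Vfg V) : K ⊆ KB V (BK V K) := by
  intro A hA
  obtain ⟨hAV, hAfg⟩ := hK hA
  obtain ⟨n, v, hv⟩ := hAfg.exists_fin_generators
  have hh := isHom_freeLift (C := V) hAV v
  have hiso := hh.isomorphic_quotAlg (freeLift_surjective hAV hv) fun _ _ => Iff.rfl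
  exact mem_KB.2 ⟨n, ⟨_, hh.isCongruence_ker⟩, ⟨A, hA, hiso.symm⟩, hiso⟩

end ClassToFamily

section FamilyToClass

variable {V : Set (Alg σ)} {B : ∀ k : ℕ, Set (Cong (freeAlg V k))}

theorem KB_subset_Vfg (hV : IsVariety V) : KB V B ⊆ Vfg V := by
  intro A hA
  obtain ⟨k, θ, -, h, hh, hbij⟩ := mem_KB.1 hA
  exact ⟨hV.2.2 ⟨_, quotAlg_freeAlg_mem hV θ, h, hh, hbij.2⟩,
    (finGen_quotAlg_freeAlg θ).of_surjective hh hbij.2⟩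

theorem KB_subset_Sf (hV : IsVariety V) : KB V B ⊆ Sf (KB V B) := fun A hA =>
  ⟨(KB_subset_Vfg hV hA).2, A, hA, id, fun _ _ => rfl, Function.injective_id⟩

theorem mem_KB_of_embedding (hV : IsVariety V) (hB : InvSubstClosed V B) {A : Alg σ}
    (hA : FinGen A) {m : ℕ} {ψ : Cong (freeAlg V m)} (hψ : ψ ∈ B m)
    {e : A.carrier → (quotAlg (freeAlg V m) ψ.r).carrier}
    (he : IsHom A (quotAlg (freeAlg V m) ψ.r) e) (heinj : Function.Injective e) :
    A ∈ KB V B := by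
  have hAV : A ∈ V := hV.2.1 ⟨_, quotAlg_freeAlg_mem hV ψ, e, he, heinj⟩
  obtain ⟨n, v, hv⟩ := hA.exists_fin_generators
  have hlift := isHom_freeLift (C := V) hAV v
  obtain ⟨θ, hθ, hθr⟩ :=
    hB m n ψ hψ fun j => (e (freeLift V n A v (freeVar V n j))).out
  have hker : ∀ a b, θ.r a b ↔ freeLift V n A v a = freeLift V n A v b := fun a b => by
    rw [hθr, conSubstRel_iff_of_isHom (hlift.comp he) (fun j => Quot.out_eq _)]
    exact heinj.eq_iff
  exact mem_KB.2 ⟨n, θ, hθ, hlift.isomorphic_quotAlg (freeLift_surjective hAV hv) hker⟩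

theorem Sf_KB_subset (hV : IsVariety V) (hB : InvSubstClosed V B) : Sf (KB V B) ⊆ KB V B := by
  rintro A ⟨hA, A', hA', e, he, heinj⟩
  obtain ⟨m, ψ, hψ, hiso⟩ := mem_KB.1 hA'
  obtain ⟨g, hg, hgbij⟩ := hiso.symm
  exact mem_KB_of_embedding hV hB hA hψ (he.comp hg) (hgbij.1.comp heinj)

theorem BK_KB_subset (hB : InvSubstClosed V B) (k : ℕ) : BK V (KB V B) k ⊆ B k := by
  rintro θ ⟨A, hA, hiso⟩
  obtain ⟨m, ψ, hψ, hiso'⟩ := mem_KB.1 hA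
  obtain ⟨G, hG, hGbij⟩ := hiso.symm.trans hiso'.symm
  have hh := θ.isHom_mk.comp hG
  obtain ⟨θ', hθ', hθ'r⟩ := hB m k ψ hψ fun j => (G (Quot.mk θ.r (freeVar V k j))).out
  suffices θ' = θ from this ▸ hθ'
  refine Cong.r_injective (hθ'r.trans (funext₂ fun a b => propext ?_))
  rw [conSubstRel_iff_of_isHom hh (fun j => Quot.out_eq _)]
  exact hGbij.1.eq_iff.trans (θ.iscon.1.quot_mk_eq_iff a b)

theorem subset_BK_KB (k : ℕ) : B k ⊆ BK V (KB V B) k :=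
  fun θ hθ => ⟨_, mem_KB.2 ⟨k, θ, hθ, .refl _⟩, .refl _⟩

end FamilyToClass

/-- Proposition 3 of the paper. The assignments `K ↦ B^K` and
`B ↦ K^B` establish a one-to-one correspondence between the subclasses of `V_fg`
closed under finitely generated subalgebras and the subfamilies of `Con(F^V)`
closed under inverse substitution. -/
theorem correspondence_Sf {σ : Signature} (V : Set (Alg σ)) (hV : IsVariety V) :
    (∀ K : Set (Alg σ), K ⊆ Vfg V → Sf K = K →
      InvSubstClosed V (BK V K) ∧ KB V (BK V K) = K) ∧
    (∀ B : ∀ k : ℕ, Set (Cong (freeAlg V k)), InvSubstClosed V B →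
      (KB V B ⊆ Vfg V ∧ Sf (KB V B) = KB V B) ∧ ∀ k : ℕ, BK V (KB V B) k = B k) := by
  refine ⟨fun K hKV hK => ⟨invSubstClosed_BK hV hK.subset, ?_⟩,
    fun B hB => ⟨⟨KB_subset_Vfg hV, ?_⟩, fun k => ?_⟩⟩
  · have hIcl : Icl K ⊆ K := (Icl_subset_Sf fun A hA => (hKV hA).2).trans hK.subset
    exact (KB_BK_subset hIcl).antisymm (subset_KB_BK hKV)
  · exact (Sf_KB_subset hV hB).antisymm (KB_subset_Sf hV)
  · exact (BK_KB_subset hB k).antisymm (subset_BK_KB k)
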